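/- Let ς = (ς₁, ς₂) ∈ {(1,0), (0,1)} and let m, n, a, b, c be natural numbers with a ≥ 1, c ≥ 1, b ≥ a+c, m ≥ c, and n−b+c ≥ 1; set α := m−n+b−2c+ς₂. Then in ℚ(q): Ξ^{a,b,c}_{m,n,ς} = ( q^(−a(−1+2m+2b−4c−a)/2) · qbinom(n−b+c+a, a) ) / ( q^(−(a−1)(2m+2b−4c−a)/2) · qbinom(n−b+c+a−2, a−1) · q^(ς₂) ) · Ω^(a−1,b,c)_{m,n−1,a−1,c,ς} + ( q^(−a(−1+2m+2b−4c−a)/2) · qbinom(n−b+c+a, a) · q^(a(c−1)−(a−2)+α−1) ) / ( q^(−(a−1)(2+2m+2b−4c−a)/2) · qbinom(n−b+c+a−1, a−1) · q^(ς₂+(a−1)(c−1)) ) · Ω^(a−1,b−1,c−1)_{m,n,a−1,c−1,ς}. -/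
import Mathlib


open scoped BigOperators

/-- The generator `q` of the field of rational functions `ℚ(q)`. -/
noncomputable def q : RatFunc ℚ := RatFunc.X

/-- The balanced quantum integer `[a] = (q^a - q^(-a))/(q - q⁻¹)`. -/
noncomputable def qint (a : ℤ) : RatFunc ℚ := (q ^ a - q ^ (-a)) / (q - q⁻¹)

/-- The quantum factorial `[k]! = [1][2]⋯[k]`. -/
noncomputable def qfact (k : ℕ) : RatFunc ℚ := ∏ i ∈ Finset.range k, qint ((i : ℤ) + 1)

/-- The balanced quantum binomial `qbinom a b = [a][a-1]⋯[a-b+1]/[b]!` for `b ≥ 0`,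
and `0` for `b < 0`. -/
noncomputable def qbinom (a b : ℤ) : RatFunc ℚ :=
  if b < 0 then 0
  else (∏ i ∈ Finset.range b.toNat, qint (a - (i : ℤ))) / qfact b.toNat

/-- The product `[α][α+2]⋯[α+2k−2]` of `k` balanced quantum integers. -/
noncomputable def prodQint (α : ℤ) (k : ℕ) : RatFunc ℚ :=
  ∏ i ∈ Finset.range k, qint (α + 2 * (i : ℤ))

/-- `Ω^(a,b,c)_{m,n,x,θ,ς} = Σ_{k+y=θ} (−1)^k·([α][α+2]⋯[α+2k−2]/[k]!)·q^(ς₂(y−x))·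
q^(−y(y+1+2n+2c−2b)/2 − x(x−1+2m+2b−4c−2a−2y+2k)/2)·qbinom(n−b+c+x, x)·qbinom(m−c+θ, y)`,
where `α = m − n + b − 2c + ς₂`. -/
noncomputable def OmegaA (ς : ℤ × ℤ) (m n a b c : ℤ) (x θ : ℕ) : RatFunc ℚ :=
  ∑ k ∈ Finset.range (θ + 1),
    (fun y : ℤ =>
      (-1 : RatFunc ℚ) ^ k * (prodQint (m - n + b - 2 * c + ς.2) k / qfact k) *
        q ^ (ς.2 * (y - (x : ℤ))) *
        q ^ ((-(y * (y + 1 + 2 * n + 2 * c - 2 * b)) -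
              (x : ℤ) * ((x : ℤ) - 1 + 2 * m + 2 * b - 4 * c - 2 * a - 2 * y + 2 * (k : ℤ))) / 2) *
        qbinom (n - b + c + (x : ℤ)) (x : ℤ) *
        qbinom (m - c + (θ : ℤ)) y) ((θ - k : ℕ) : ℤ)

/-- The coefficient `C_k`: `C_0 = 1` and, for `k ≥ 1`,
`C_k = [α+k−1]·([α+1][α+3]⋯[α+2k−3])/[k]!`. -/
noncomputable def Ck (α : ℤ) (k : ℕ) : RatFunc ℚ :=
  if k = 0 then 1
  else qint (α + (k : ℤ) - 1) *
    (∏ i ∈ Finset.range (k - 1), qint (α + 2 * ((i : ℤ) + 1) - 1)) / qfact k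

/-- `Ξ^(a,b,c)_{m,n,x,θ,ς} = Σ_{k+y=θ} (−1)^k·C_k·q^(ς₂(y−x))·
q^(−y(y+1+2n+2c−2b)/2 − x(x−1+2m+2b−4c−2a−2y+2k)/2)·qbinom(n−b+c+x, x)·qbinom(m−c+θ, y)`,
where `α = m − n + b − 2c + ς₂`. -/
noncomputable def XiA (ς : ℤ × ℤ) (m n a b c : ℤ) (x θ : ℕ) : RatFunc ℚ :=
  ∑ k ∈ Finset.range (θ + 1),
    (fun y : ℤ =>
      (-1 : RatFunc ℚ) ^ k * Ck (m - n + b - 2 * c + ς.2) k *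
        q ^ (ς.2 * (y - (x : ℤ))) *
        q ^ ((-(y * (y + 1 + 2 * n + 2 * c - 2 * b)) -
              (x : ℤ) * ((x : ℤ) - 1 + 2 * m + 2 * b - 4 * c - 2 * a - 2 * y + 2 * (k : ℤ))) / 2) *
        qbinom (n - b + c + (x : ℤ)) (x : ℤ) *
        qbinom (m - c + (θ : ℤ)) y) ((θ - k : ℕ) : ℤ)



lemma hq : q ≠ 0 := RatFunc.X_ne_zero
lemma qpow_ne (t : ℤ) : q ^ t ≠ 0 := zpow_ne_zero t hq
lemma qpow_add (s t : ℤ) : q ^ (s + t) = q ^ s * q ^ t := zpow_add₀ hq s t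
lemma qpow_shift (E d : ℤ) : q ^ ((E + d * 2) / 2) = q ^ (E / 2) * q ^ d := by
  rw [Int.add_mul_ediv_right E d (by norm_num : (2:ℤ) ≠ 0), qpow_add]

lemma q_intDegree_pow (n : ℕ) : (q ^ n).intDegree = n := by
  induction n with
  | zero => simpa using RatFunc.intDegree_one
  | succ n ih =>
    rw [pow_succ, RatFunc.intDegree_mul (pow_ne_zero n hq) hq, ih,
      show q = RatFunc.X from rfl, RatFunc.intDegree_X]
    push_cast; ring

lemma q_intDegree_zpow (t : ℤ) : (q ^ t).intDegree = t := by
  obtain ⟨n, rfl | rfl⟩ := t.eq_nat_or_neg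
  · rw [zpow_natCast]; exact q_intDegree_pow n
  · rw [zpow_neg, zpow_natCast]
    have h1 : (q ^ n) * (q ^ n)⁻¹ = 1 := mul_inv_cancel₀ (pow_ne_zero n hq)
    have h2 := RatFunc.intDegree_mul (pow_ne_zero n hq) (inv_ne_zero (pow_ne_zero n hq))
    rw [h1, RatFunc.intDegree_one] at h2
    have := q_intDegree_pow n
    omega

lemma qpow_injective : Function.Injective (fun t : ℤ => q ^ t) := by
  intro s t h
  have := congrArg RatFunc.intDegree h
  simpa [q_intDegree_zpow] using this

lemma qsub_ne : q - q⁻¹ ≠ 0 := by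
  intro h
  have h1 : q ^ (1:ℤ) = q ^ (-1:ℤ) := by
    simpa [zpow_one, zpow_neg] using sub_eq_zero.mp h
  have := qpow_injective h1
  omega

lemma qint_ne_zero {j : ℤ} (h : j ≠ 0) : qint j ≠ 0 := by
  unfold qint
  apply div_ne_zero _ qsub_ne
  intro hz
  have : q ^ j = q ^ (-j) := sub_eq_zero.mp hz
  have := qpow_injective this
  omega

lemma qfact_ne_zero (k : ℕ) : qfact k ≠ 0 := by
  unfold qfact
  apply Finset.prod_ne_zero_iff.mpr
  intro i _
  exact qint_ne_zero (by positivity)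

lemma qbinom_nat (x : ℤ) (b : ℕ) :
    qbinom x (b : ℤ) = (∏ i ∈ Finset.range b, qint (x - (i : ℤ))) / qfact b := by
  unfold qbinom
  rw [if_neg (by omega)]
  simp

lemma qbinom_ne_zero (x : ℤ) (b : ℕ) (h : (b : ℤ) ≤ x) : qbinom x (b : ℤ) ≠ 0 := by
  rw [qbinom_nat]
  apply div_ne_zero _ (qfact_ne_zero b)
  apply Finset.prod_ne_zero_iff.mpr
  intro i hi
  simp only [Finset.mem_range] at hi
  apply qint_ne_zero
  omega

-- key additive identity: [u] = q^k [u+k] - q^(u+k) [k]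
lemma qint_split (u k : ℤ) : qint u = q ^ k * qint (u + k) - q ^ (u + k) * qint k := by
  unfold qint
  rw [← mul_div_assoc, ← mul_div_assoc, ← sub_div]
  congr 1
  have e1 : q ^ k * (q ^ (u+k) - q ^ (-(u+k))) = q ^ (u + 2*k) - q ^ (-u) := by
    rw [mul_sub, ← qpow_add, ← qpow_add]; ring_nf
  have e2 : q ^ (u+k) * (q ^ k - q ^ (-k)) = q ^ (u + 2*k) - q ^ u := by
    rw [mul_sub, ← qpow_add, ← qpow_add]; ring_nf
  rw [e1, e2]; ring

lemma Ck_succ (α : ℤ) (j : ℕ) :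
    Ck α (j + 1) = q ^ ((j : ℤ) + 1) * (prodQint (α + 1) (j + 1) / qfact (j + 1)) -
      q ^ (α + 2 * (j : ℤ) + 1) * (prodQint (α + 1) j / qfact j) := by
  have h1 : Ck α (j + 1) = qint (α + (j : ℤ)) * prodQint (α + 1) j / qfact (j + 1) := by
    unfold Ck
    rw [if_neg (by omega)]
    congr 2
    · congr 1; push_cast; ring
    · unfold prodQint
      simp only [Nat.add_sub_cancel]
      exact Finset.prod_congr rfl fun i _ => by congr 1; ring
  have h2 : prodQint (α + 1) (j + 1) = prodQint (α + 1) j * qint (α + 1 + 2 * (j : ℤ)) := by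
    unfold prodQint; rw [Finset.prod_range_succ]
  have h3 : qfact (j + 1) = qfact j * qint ((j : ℤ) + 1) := by
    unfold qfact; rw [Finset.prod_range_succ]
  have h4 := qint_split (α + (j : ℤ)) ((j : ℤ) + 1)
  rw [h1, h2, h3, h4]
  rw [show α + (j:ℤ) + ((j:ℤ) + 1) = α + 2 * (j:ℤ) + 1 by ring,
      show α + 1 + 2 * (j:ℤ) = α + 2 * (j:ℤ) + 1 by ring]
  have hj : ((j:ℤ) + 1) ≠ 0 := by omega
  field_simp [qint_ne_zero hj, qfact_ne_zero]

lemma step_zero (BN B2 BM : RatFunc ℚ) (hB2 : B2 ≠ 0) (h1 h2 h3 h4 s s1 s2 : ℤ)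
    (e1 : h2 + s2 + h4 = h3 + s + (h1 + s1)) :
    q ^ s1 * q ^ h1 * BN * BM =
      q ^ h2 * BN / (q ^ h3 * B2 * q ^ s) * (q ^ s2 * q ^ h4 * B2 * BM) := by
  have key : q ^ h2 * q ^ s2 * q ^ h4 = q ^ h3 * q ^ s * (q ^ h1 * q ^ s1) := by
    simp only [← qpow_add]
    exact congrArg (q ^ ·) e1
  have hd : (q ^ h3 * B2 * q ^ s) ≠ 0 :=
    mul_ne_zero (mul_ne_zero (qpow_ne _) hB2) (qpow_ne _)
  have t : q ^ h2 * BN / (q ^ h3 * B2 * q ^ s) * (q ^ s2 * q ^ h4 * B2 * BM) =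
      q ^ s1 * q ^ h1 * BN * BM := by
    rw [div_mul_eq_mul_div, div_eq_iff hd]
    linear_combination BN * B2 * BM * key
  exact t.symm

lemma step_term (k : ℕ) (CkV P1 F1 P0 F0 BN B2 B1 BM : RatFunc ℚ)
    (hB2 : B2 ≠ 0) (hB1 : B1 ≠ 0)
    (h1 h2 h3 h4 h5 h6 s s1 s2 g1 g2 g3 g4 : ℤ)
    (hCk : CkV = q ^ g3 * (P1 / F1) - q ^ g4 * (P0 / F0))
    (e1 : h2 + s2 + h4 = h3 + s + (g3 + h1 + s1))
    (e2 : h2 + g1 + s2 + h6 = h5 + g2 + (g4 + h1 + s1)) :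
    (-1 : RatFunc ℚ) ^ (k+1) * CkV * q ^ s1 * q ^ h1 * BN * BM =
      q ^ h2 * BN / (q ^ h3 * B2 * q ^ s) *
        ((-1 : RatFunc ℚ) ^ (k+1) * (P1 / F1) * q ^ s2 * q ^ h4 * B2 * BM) +
      q ^ h2 * BN * q ^ g1 / (q ^ h5 * B1 * q ^ g2) *
        ((-1 : RatFunc ℚ) ^ k * (P0 / F0) * q ^ s2 * q ^ h6 * B1 * BM) := by
  have key1 : q ^ h2 * q ^ s2 * q ^ h4 = q ^ h3 * q ^ s * (q ^ g3 * (q ^ h1 * q ^ s1)) := by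
    simp only [← qpow_add]
    exact congrArg (q ^ ·) (by omega)
  have key2 : q ^ h2 * q ^ g1 * q ^ s2 * q ^ h6 =
      q ^ h5 * q ^ g2 * (q ^ g4 * (q ^ h1 * q ^ s1)) := by
    simp only [← qpow_add]
    exact congrArg (q ^ ·) (by omega)
  have t1 : q ^ h2 * BN / (q ^ h3 * B2 * q ^ s) *
      ((-1 : RatFunc ℚ) ^ (k+1) * (P1 / F1) * q ^ s2 * q ^ h4 * B2 * BM) =
      (-1 : RatFunc ℚ) ^ (k+1) * (q ^ g3 * (P1 / F1)) * q ^ s1 * q ^ h1 * BN * BM := by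
    rw [div_mul_eq_mul_div, div_eq_iff (by
      exact mul_ne_zero (mul_ne_zero (qpow_ne _) hB2) (qpow_ne _))]
    linear_combination (-1 : RatFunc ℚ) ^ (k+1) * (P1 / F1) * BN * B2 * BM * key1
  have t2 : q ^ h2 * BN * q ^ g1 / (q ^ h5 * B1 * q ^ g2) *
      ((-1 : RatFunc ℚ) ^ k * (P0 / F0) * q ^ s2 * q ^ h6 * B1 * BM) =
      (-1 : RatFunc ℚ) ^ k * (q ^ g4 * (P0 / F0)) * q ^ s1 * q ^ h1 * BN * BM := by
    rw [div_mul_eq_mul_div, div_eq_iff (by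
      exact mul_ne_zero (mul_ne_zero (qpow_ne _) hB1) (qpow_ne _))]
    linear_combination (-1 : RatFunc ℚ) ^ k * (P0 / F0) * BN * B1 * BM * key2
  rw [t1, t2, hCk]
  ring

/-- Lemma 6.3 of the paper: the expression of `Ξ^{a,b,c}_{m,n,ς} = Ξ^(a,b,c)_{m,n,a,c,ς}`
in terms of `Ω^(a−1,b,c)_{m,n−1,a−1,c,ς}` and `Ω^(a−1,b−1,c−1)_{m,n,a−1,c−1,ς}`. -/
theorem XiA_recursion (ς : ℤ × ℤ) (hς : ς = (1, 0) ∨ ς = (0, 1)) (m n a b c : ℕ)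
    (ha : 1 ≤ a) (hc : 1 ≤ c) (hb : a + c ≤ b) (hm : c ≤ m)
    (hn : 1 ≤ (n : ℤ) - (b : ℤ) + (c : ℤ)) :
    XiA ς (m : ℤ) (n : ℤ) (a : ℤ) (b : ℤ) (c : ℤ) a c =
      (q ^ ((-((a : ℤ) * (-1 + 2 * (m : ℤ) + 2 * (b : ℤ) - 4 * (c : ℤ) - (a : ℤ)))) / 2) *
          qbinom ((n : ℤ) - (b : ℤ) + (c : ℤ) + (a : ℤ)) (a : ℤ)) /
        (q ^ ((-(((a : ℤ) - 1) * (2 * (m : ℤ) + 2 * (b : ℤ) - 4 * (c : ℤ) - (a : ℤ)))) / 2) *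
          qbinom ((n : ℤ) - (b : ℤ) + (c : ℤ) + (a : ℤ) - 2) ((a : ℤ) - 1) * q ^ ς.2) *
        OmegaA ς (m : ℤ) ((n : ℤ) - 1) ((a : ℤ) - 1) (b : ℤ) (c : ℤ) (a - 1) c +
      (q ^ ((-((a : ℤ) * (-1 + 2 * (m : ℤ) + 2 * (b : ℤ) - 4 * (c : ℤ) - (a : ℤ)))) / 2) *
          qbinom ((n : ℤ) - (b : ℤ) + (c : ℤ) + (a : ℤ)) (a : ℤ) *
          q ^ ((a : ℤ) * ((c : ℤ) - 1) - ((a : ℤ) - 2) +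
                ((m : ℤ) - (n : ℤ) + (b : ℤ) - 2 * (c : ℤ) + ς.2) - 1)) /
        (q ^ ((-(((a : ℤ) - 1) * (2 + 2 * (m : ℤ) + 2 * (b : ℤ) - 4 * (c : ℤ) - (a : ℤ)))) / 2) *
          qbinom ((n : ℤ) - (b : ℤ) + (c : ℤ) + (a : ℤ) - 1) ((a : ℤ) - 1) *
          q ^ (ς.2 + ((a : ℤ) - 1) * ((c : ℤ) - 1))) *
        OmegaA ς (m : ℤ) (n : ℤ) ((a : ℤ) - 1) ((b : ℤ) - 1) ((c : ℤ) - 1) (a - 1) (c - 1) := by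
  obtain ⟨a0, rfl⟩ : ∃ a0, a = a0 + 1 := ⟨a - 1, by omega⟩
  obtain ⟨c0, rfl⟩ : ∃ c0, c = c0 + 1 := ⟨c - 1, by omega⟩
  clear hς ha hc
  unfold XiA OmegaA
  simp only [Nat.add_sub_cancel]
  rw [Finset.mul_sum, Finset.mul_sum, Finset.sum_range_succ' _ (c0 + 1), Finset.sum_range_succ' _ (c0 + 1)]
  conv_rhs => rw [add_right_comm]
  rw [← Finset.sum_add_distrib]
  congr 1
  · refine Finset.sum_congr rfl fun k hk => ?_
    have hk' : k ≤ c0 := by simp only [Finset.mem_range] at hk; omega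
    simp only [Nat.succ_sub_succ]
    push_cast [Nat.cast_sub hk']
    rw [show ((a0:ℤ) + 1 - 1) = (a0:ℤ) by ring,
        show ((c0:ℤ) + 1 - 1) = (c0:ℤ) by ring,
        show ((m:ℤ) - ((n:ℤ) - 1) + (b:ℤ) - 2 * ((c0:ℤ) + 1) + ς.2)
          = ((m:ℤ) - (n:ℤ) + (b:ℤ) - 2 * ((c0:ℤ) + 1) + ς.2) + 1 by ring,
        show ((m:ℤ) - (n:ℤ) + ((b:ℤ) - 1) - 2 * (c0:ℤ) + ς.2)
          = ((m:ℤ) - (n:ℤ) + (b:ℤ) - 2 * ((c0:ℤ) + 1) + ς.2) + 1 by ring,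
        show ((m:ℤ) - ((c0:ℤ) + 1) + ((c0:ℤ) + 1)) = (m:ℤ) by ring,
        show ((m:ℤ) - (c0:ℤ) + (c0:ℤ)) = (m:ℤ) by ring,
        show ((n:ℤ) - 1 - (b:ℤ) + ((c0:ℤ) + 1) + (a0:ℤ))
          = ((n:ℤ) - (b:ℤ) + (c0:ℤ) + (a0:ℤ)) by ring,
        show ((n:ℤ) - (b:ℤ) + ((c0:ℤ) + 1) + ((a0:ℤ) + 1) - 2)
          = ((n:ℤ) - (b:ℤ) + (c0:ℤ) + (a0:ℤ)) by ring,
        show ((n:ℤ) - ((b:ℤ) - 1) + (c0:ℤ) + (a0:ℤ))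
          = ((n:ℤ) - (b:ℤ) + (c0:ℤ) + (a0:ℤ) + 1) by ring,
        show ((n:ℤ) - (b:ℤ) + ((c0:ℤ) + 1) + ((a0:ℤ) + 1) - 1)
          = ((n:ℤ) - (b:ℤ) + (c0:ℤ) + (a0:ℤ) + 1) by ring]
    have hB2 : qbinom ((n:ℤ) - (b:ℤ) + (c0:ℤ) + (a0:ℤ)) ((a0:ℕ) : ℤ) ≠ 0 :=
      qbinom_ne_zero _ a0 (by push_cast at hn ⊢; omega)
    have hB1 : qbinom ((n:ℤ) - (b:ℤ) + (c0:ℤ) + (a0:ℤ) + 1) ((a0:ℕ) : ℤ) ≠ 0 :=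
      qbinom_ne_zero _ a0 (by push_cast at hn ⊢; omega)
    refine step_term k _ _ _ _ _ _ _ _ _ hB2 hB1 _ _ _ _ _ _ _ _ _ _ _ _ _
      (Ck_succ ((m:ℤ) - (n:ℤ) + (b:ℤ) - 2 * ((c0:ℤ) + 1) + ς.2) k) ?e1 ?e2
    case e1 =>
      rw [show (-(((a0:ℤ)+1)*(-1+2*(m:ℤ)+2*(b:ℤ)-4*((c0:ℤ)+1)-((a0:ℤ)+1))))
            = (-((a0:ℤ)*(2*(m:ℤ)+2*(b:ℤ)-4*((c0:ℤ)+1)-((a0:ℤ)+1))))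
              + ((a0:ℤ)+3+2*(c0:ℤ)-(m:ℤ)-(b:ℤ)) * 2 by ring,
          Int.add_mul_ediv_right _ _ (by norm_num : (2:ℤ) ≠ 0),
          show (-(((c0:ℤ)-(k:ℤ))*((c0:ℤ)-(k:ℤ)+1+2*(n:ℤ)+2*((c0:ℤ)+1)-2*(b:ℤ)))
                - ((a0:ℤ)+1)*((a0:ℤ)+2*(m:ℤ)+2*(b:ℤ)-4*((c0:ℤ)+1)-2*((a0:ℤ)+1)
                  -2*((c0:ℤ)-(k:ℤ))+2*((k:ℤ)+1)))
            = (-(((c0:ℤ)-(k:ℤ))*((c0:ℤ)-(k:ℤ)+1+2*((n:ℤ)-1)+2*((c0:ℤ)+1)-2*(b:ℤ)))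
                - (a0:ℤ)*((a0:ℤ)-1+2*(m:ℤ)+2*(b:ℤ)-4*((c0:ℤ)+1)-2*(a0:ℤ)
                  -2*((c0:ℤ)-(k:ℤ))+2*((k:ℤ)+1)))
              + ((a0:ℤ)+2+2*(c0:ℤ)-(m:ℤ)-(b:ℤ)-(k:ℤ)) * 2 by ring,
          Int.add_mul_ediv_right _ _ (by norm_num : (2:ℤ) ≠ 0)]
      ring
    case e2 =>
      rw [show (-(((a0:ℤ)+1)*(-1+2*(m:ℤ)+2*(b:ℤ)-4*((c0:ℤ)+1)-((a0:ℤ)+1))))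
            = (-((a0:ℤ)*(2+2*(m:ℤ)+2*(b:ℤ)-4*((c0:ℤ)+1)-((a0:ℤ)+1))))
              + (2*(a0:ℤ)+2*(c0:ℤ)-(m:ℤ)-(b:ℤ)+3) * 2 by ring,
          Int.add_mul_ediv_right _ _ (by norm_num : (2:ℤ) ≠ 0),
          show (-(((c0:ℤ)-(k:ℤ))*((c0:ℤ)-(k:ℤ)+1+2*(n:ℤ)+2*((c0:ℤ)+1)-2*(b:ℤ)))
                - ((a0:ℤ)+1)*((a0:ℤ)+2*(m:ℤ)+2*(b:ℤ)-4*((c0:ℤ)+1)-2*((a0:ℤ)+1)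
                  -2*((c0:ℤ)-(k:ℤ))+2*((k:ℤ)+1)))
            = (-(((c0:ℤ)-(k:ℤ))*((c0:ℤ)-(k:ℤ)+1+2*(n:ℤ)+2*(c0:ℤ)-2*((b:ℤ)-1)))
                - (a0:ℤ)*((a0:ℤ)-1+2*(m:ℤ)+2*((b:ℤ)-1)-4*(c0:ℤ)-2*(a0:ℤ)
                  -2*((c0:ℤ)-(k:ℤ))+2*(k:ℤ)))
              + ((a0:ℤ)+3*(c0:ℤ)-(m:ℤ)-(b:ℤ)-2*(k:ℤ)+2) * 2 by ring,
          Int.add_mul_ediv_right _ _ (by norm_num : (2:ℤ) ≠ 0)]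
      ring
  · push_cast
    rw [show ((a0:ℤ) + 1 - 1) = (a0:ℤ) by ring,
        show ((m:ℤ) - ((c0:ℤ) + 1) + ((c0:ℤ) + 1)) = (m:ℤ) by ring,
        show ((n:ℤ) - 1 - (b:ℤ) + ((c0:ℤ) + 1) + (a0:ℤ))
          = ((n:ℤ) - (b:ℤ) + (c0:ℤ) + (a0:ℤ)) by ring,
        show ((n:ℤ) - (b:ℤ) + ((c0:ℤ) + 1) + ((a0:ℤ) + 1) - 2)
          = ((n:ℤ) - (b:ℤ) + (c0:ℤ) + (a0:ℤ)) by ring]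
    have hB2 : qbinom ((n:ℤ) - (b:ℤ) + (c0:ℤ) + (a0:ℤ)) ((a0:ℕ) : ℤ) ≠ 0 :=
      qbinom_ne_zero _ a0 (by push_cast at hn ⊢; omega)
    simp only [Ck, reduceIte, prodQint, qfact, Finset.prod_range_zero, pow_zero, one_mul, div_one]
    refine step_zero _ _ _ hB2 _ _ _ _ _ _ _ ?e0
    case e0 =>
      rw [show (-(((a0:ℤ)+1)*(-1+2*(m:ℤ)+2*(b:ℤ)-4*((c0:ℤ)+1)-((a0:ℤ)+1))))
            = (-((a0:ℤ)*(2*(m:ℤ)+2*(b:ℤ)-4*((c0:ℤ)+1)-((a0:ℤ)+1))))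
              + ((a0:ℤ)+3+2*(c0:ℤ)-(m:ℤ)-(b:ℤ)) * 2 by ring,
          Int.add_mul_ediv_right _ _ (by norm_num : (2:ℤ) ≠ 0),
          show (-(((c0:ℤ)+1)*((c0:ℤ)+1+1+2*(n:ℤ)+2*((c0:ℤ)+1)-2*(b:ℤ)))
                - ((a0:ℤ)+1)*((a0:ℤ)+2*(m:ℤ)+2*(b:ℤ)-4*((c0:ℤ)+1)-2*((a0:ℤ)+1)
                  -2*((c0:ℤ)+1)+0))
            = (-(((c0:ℤ)+1)*((c0:ℤ)+1+1+2*((n:ℤ)-1)+2*((c0:ℤ)+1)-2*(b:ℤ)))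
                - (a0:ℤ)*((a0:ℤ)-1+2*(m:ℤ)+2*(b:ℤ)-4*((c0:ℤ)+1)-2*(a0:ℤ)
                  -2*((c0:ℤ)+1)+0))
              + ((a0:ℤ)+3+2*(c0:ℤ)-(m:ℤ)-(b:ℤ)) * 2 by ring,
          Int.add_mul_ediv_right _ _ (by norm_num : (2:ℤ) ≠ 0)]
      ring
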